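/- The cohomology of the cyclic de Rham complex (Ω_cyc(X), d) of a formal noncommutative manifold X is trivial. Explicitly, the operator H defined on a cyclic form a = (1/k) a_{i_1⋯i_k} φ_{i_1}⋯φ_{i_k} (each φ_{i_j} being x_{i_j} or dx_{i_j}) by H(a) = Σ_j (−1)^{♯(φ_{i_1})+⋯+♯(φ_{i_{j−1}})} (1/k) a_{i_1⋯i_k} φ_{i_1}⋯(H(φ_{i_j}))⋯φ_{i_k}, with H(x_{i_j}) = 0 and H(dx_{i_j}) = x_{i_j}, satisfies dH + Hd = Id. -/

import Mathlib

noncomputable section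
namespace KS

open Finset

attribute [local instance] Classical.propDecidable

/-- `(−1)^d` in `k`, for an integer `d`. -/
def ksgn (k : Type) [Field k] (d : ℤ) : k := if Even d then 1 else -1

/-- Sum of the (shifted) degrees of a tuple of basis elements. -/
def degSum {B : Type} (deg : B → ℤ) {n : ℕ} (js : Fin n → B) : ℤ := ∑ i, deg (js i)

/-- Sum of the degrees of the first `s` entries. -/
def degPre {B : Type} (deg : B → ℤ) {n : ℕ} (js : Fin n → B) (s : ℕ) : ℤ :=
  ∑ i ∈ Finset.range s, if h : i < n then deg (js ⟨i, h⟩) else 0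

/-- The Koszul sign `(-1)^{|x_1|'+⋯+|x_s|'}`. -/
def preSign (k : Type) [Field k] {B : Type} (deg : B → ℤ) {n : ℕ} (js : Fin n → B) (s : ℕ) : k :=
  ksgn k (degPre deg js s)

/-- Replace the block of length `j` starting at position `s` of `js` by the single
letter `l` (the index tuple for the outer operation in the A∞-equation). -/
def spliceIdx {B : Type} {n : ℕ} (js : Fin n → B) (s j : ℕ) (h : s + j ≤ n) (l : B) :
    Fin (n - j + 1) → B := fun i =>
  if hi : (i : ℕ) < s then js ⟨i, by omega⟩
  else if hi' : (i : ℕ) = s then l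
  else js ⟨(i : ℕ) + j - 1, by omega⟩

/-- The block of length `j` starting at position `s`. -/
def blockIdx {B : Type} {n : ℕ} (js : Fin n → B) (s j : ℕ) (h : s + j ≤ n) : Fin j → B :=
  fun i => js ⟨s + (i : ℕ), by omega⟩

/-! ### Formal noncommutative manifolds, cyclic differential forms, and calculus -/

/-- The alphabet of `𝒪(T[1]X)`: a letter is either a coordinate `x_i` (`inl i`) or its
differential `dx_i` (`inr i`). -/
abbrev Letter (ι : Type) := ι ⊕ ι

/-- A monomial word in the variables `x_i, dx_i`. -/
abbrev GWord (ι : Type) := List (Letter ι)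

/-- A noncommutative formal power series in `x_i, dx_i`: an element of `𝒪(T[1]X)`,
given by its coefficient on each monomial word. -/
abbrev WFun (K ι : Type) := GWord ι → K

/-- The underlying variable index of a letter. -/
def xIdx {ι : Type} : Letter ι → ι := Sum.elim id id

/-- The internal degree `|·|'` of a letter (`|dx_i| = |x_i|`). -/
def letterDeg {ι : Type} (degx : ι → ℤ) : Letter ι → ℤ := Sum.elim degx degx

/-- The form degree `♯` of a letter: `♯(x_i) = 0`, `♯(dx_i) = 1`. -/
def letterSharp {ι : Type} : Letter ι → ℤ := Sum.elim (fun _ => 0) (fun _ => 1)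

def wordDeg {ι : Type} (degx : ι → ℤ) (w : GWord ι) : ℤ := (w.map (letterDeg degx)).sum

def wordSharp {ι : Type} (w : GWord ι) : ℤ := (w.map (letterSharp)).sum

variable (K : Type) [Field K]

/-- The (noncommutative) product of formal power series. -/
def wmul {ι : Type} (f g : WFun K ι) : WFun K ι := fun w =>
  ∑ i ∈ Finset.range (w.length + 1), f (w.take i) * g (w.drop i)

/-- The indicator series of a monomial word. -/
def dirac {ι : Type} [DecidableEq ι] (u : GWord ι) : WFun K ι := fun w =>
  if w = u then 1 else 0

/-- The graded commutator `[u,v] = uv − (−1)^{|u|'|v|' + ♯u·♯v} vu` of two monomials. -/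
def gcomm {ι : Type} [DecidableEq ι] (degx : ι → ℤ) (u v : GWord ι) : WFun K ι :=
  dirac K (u ++ v)
    - ksgn K (wordDeg degx u * wordDeg degx v + wordSharp u * wordSharp v) • dirac K (v ++ u)

/-- The length-`m` homogeneous component of a series. -/
def trunc {ι : Type} (m : ℕ) (f : WFun K ι) : WFun K ι := fun w =>
  if w.length = m then f w else 0

/-- The closure `[𝒪(T[1]X), 𝒪(T[1]X)]_{top}` of the span of graded commutators in the
adic topology: a series lies in it iff each of its length-homogeneous components is a
(finite) combination of graded commutators. `Ω_{cyc}(X) = 𝒪(T[1]X)/[·,·]_{top}`. -/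
def CommT {ι : Type} [DecidableEq ι] (degx : ι → ℤ) : Submodule K (WFun K ι) where
  carrier := {f | ∀ m : ℕ, trunc K m f ∈
    Submodule.span K (Set.range fun uv : GWord ι × GWord ι => gcomm K degx uv.1 uv.2)}
  add_mem' := by
    intro f g hf hg m
    have : trunc K m (f + g) = trunc K m f + trunc K m g := by
      funext w; simp only [trunc, Pi.add_apply]; split <;> simp
    rw [this]; exact Submodule.add_mem _ (hf m) (hg m)
  zero_mem' := by
    intro m
    have : trunc K m (0 : WFun K ι) = 0 := by
      funext w; simp only [trunc, Pi.zero_apply]; split <;> rfl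
    rw [this]; exact Submodule.zero_mem _
  smul_mem' := by
    intro c f hf m
    have : trunc K m (c • f) = c • trunc K m f := by
      funext w; simp only [trunc, Pi.smul_apply, smul_eq_mul]; split <;> simp
    rw [this]; exact Submodule.smul_mem _ _ (hf m)

/-- The de Rham differential `d` on `𝒪(T[1]X)`: `d x_i = dx_i`, `d (dx_i) = 0`, extended
as a graded derivation (in coefficient form). -/
def Dop {ι : Type} : WFun K ι → WFun K ι := fun f w =>
  ∑ p ∈ Finset.range w.length,
    match w[p]? with
    | some (Sum.inr i) => ksgn K (wordSharp (w.take p)) * f (w.set p (Sum.inl i))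
    | _ => 0

/-- The contracting homotopy `H` (Poincaré lemma): `H(x_i) = 0`, `H(dx_i) = x_i`,
extended with the `1/k` normalization on words of length `k`. -/
def Hop {ι : Type} : WFun K ι → WFun K ι := fun f w =>
  (w.length : K)⁻¹ • ∑ p ∈ Finset.range w.length,
    match w[p]? with
    | some (Sum.inl i) => ksgn K (wordSharp (w.take p)) * f (w.set p (Sum.inr i))
    | _ => 0

/-- A formal vector field `ξ = ∑ ξ_i(x) ∂/∂x_i`, by the coefficients of the
series `ξ(x_i)`: `ξ(x_i) = ∑ vc ℓ (j_1,…,j_ℓ) i ⬝ x_{j_1}⋯x_{j_ℓ}`. -/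
abbrev VF (K ι : Type) := (ℓ : ℕ) → (Fin ℓ → ι) → ι → K

/-- The contraction (interior product) `i_ξ`: the derivation with `i_ξ(x_i) = 0` and
`i_ξ(dx_i) = ξ(x_i)`, in coefficient form. -/
def iContr {ι : Type} [DecidableEq ι] [Fintype ι] (degx : ι → ℤ) (v : VF K ι) :
    WFun K ι → WFun K ι := fun f w =>
  ∑ p ∈ Finset.range (w.length + 1), ∑ ℓ ∈ Finset.range (w.length + 1 - p),
    (if hblk : ((w.drop p).take ℓ).length = ℓ ∧ ((w.drop p).take ℓ).countP (·.isRight) = 0 then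
      ksgn K (wordSharp (w.take p) + wordDeg degx (w.take p)) *
        ∑ i : ι, v ℓ (fun t => xIdx (((w.drop p).take ℓ)[(t : ℕ)]'(by
            have h1 := hblk.1; have := t.isLt; omega))) i *
          f (w.take p ++ [Sum.inr i] ++ w.drop (p + ℓ))
    else 0)

/-- The Lie derivative `L_ξ = d ∘ i_ξ + i_ξ ∘ d`. -/
def LieD {ι : Type} [DecidableEq ι] [Fintype ι] (degx : ι → ℤ) (v : VF K ι)
    (f : WFun K ι) : WFun K ι :=
  Dop K (iContr K degx v f) + iContr K degx v (Dop K f)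

/-- A representative of a cyclic `s`-form: supported on words with exactly `s`
occurrences of `dx`. -/
def IsForm {ι : Type} (s : ℕ) (f : WFun K ι) : Prop :=
  ∀ w, f w ≠ 0 → w.countP (·.isRight) = s

/-- The constant two-form `∑ ω_{ab} (dx^a dx^b)_c`. -/
def constForm {ι : Type} (ω : ι → ι → K) : WFun K ι := fun w =>
  match w with
  | [Sum.inr a, Sum.inr b] => ω a b
  | _ => 0

/-- The series `ξ(x_i) ∈ 𝒪(X)` of a vector field (supported on `x`-words). -/
def serOf {ι : Type} (v : VF K ι) (i : ι) : List ι → K := fun u =>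
  v u.length (fun t => u[(t : ℕ)]'t.isLt) i

/-- The action of a (homogeneous, degree `dv`) vector field on functions
`𝒪(X) = K⟨⟨x_i⟩⟩`, as a derivation (substitution at one position). -/
def vActX {ι : Type} [Fintype ι] (degx : ι → ℤ) (dv : ℤ) (v : VF K ι) :
    (List ι → K) → (List ι → K) := fun g u =>
  ∑ p ∈ Finset.range (u.length + 1), ∑ ℓ ∈ Finset.range (u.length + 1 - p),
    (if hblk : ((u.drop p).take ℓ).length = ℓ then
      ksgn K (dv * ((u.take p).map degx).sum) *
        ∑ i : ι, v ℓ (fun t => ((u.drop p).take ℓ)[(t : ℕ)]'(by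
            have h1 := hblk; have := t.isLt; omega)) i *
          g (u.take p ++ [i] ++ u.drop (p + ℓ))
    else 0)

/-- Vanishing of the graded bracket `[v, w]` of vector fields of degrees `dv, dw`:
`v(w(x_i)) − (−1)^{dv·dw} w(v(x_i)) = 0` for all `i`. -/
def BracketZero {ι : Type} [Fintype ι] (degx : ι → ℤ) (dv dw : ℤ) (v w : VF K ι) : Prop :=
  ∀ (i : ι) (u : List ι),
    vActX K degx dv v (serOf K w i) u - ksgn K (dv * dw) * vActX K degx dw w (serOf K v i) u = 0

/-- A vector field is homogeneous of degree `dv` if `v(x_i)` has degree `degx i + dv`. -/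
def VFDeg {ι : Type} (degx : ι → ℤ) (v : VF K ι) (dv : ℤ) : Prop :=
  ∀ ℓ js i, v ℓ js i ≠ 0 → (∑ t, degx (js t)) = degx i + dv

/-- The expansion coefficient of a letter under the coordinate change
`x_i ↦ ∑ hc ℓ (j⃗) i x_{j_1}⋯x_{j_ℓ}` (so `dx_i ↦ d(…)`): the coefficient of the word
`u` in the image of the letter. -/
def expandLetter {ι : Type} (hc : VF K ι) : Letter ι → GWord ι → K
  | Sum.inl i, u => if u.countP (·.isRight) = 0
      then hc u.length (fun t => xIdx (u[(t : ℕ)]'t.isLt)) i else 0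
  | Sum.inr i, u => if u.countP (·.isRight) = 1
      then hc u.length (fun t => xIdx (u[(t : ℕ)]'t.isLt)) i else 0

/-- The induced substitution (pullback) on differential forms of a pointed coordinate
change `x_i ↦ ∑ hc ℓ (j⃗) i x_{j⃗}`. -/
def substForm {ι : Type} [Fintype ι] [DecidableEq ι] (hc : VF K ι) (β : WFun K ι) :
    WFun K ι := fun w =>
  ∑ cp : Composition w.length, ∑ ls : Fin cp.length → Letter ι,
    β (List.ofFn ls) *
      ∏ i, expandLetter K hc (ls i) (List.ofFn fun z => w.get (cp.embedding i z))

/-- The Lie derivative exponential `e^{L_v} = ∑_k (L_v)^k / k!` (a finite sum on each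
word, for `v` of length `≥ 2`). -/
def expLv {ι : Type} [DecidableEq ι] [Fintype ι] (degx : ι → ℤ) (v : VF K ι)
    (f : WFun K ι) : WFun K ι := fun w =>
  ∑ j ∈ Finset.range (w.length + 1),
    ((Nat.factorial j : K))⁻¹ * ((LieD K degx v)^[j] f) w

/-- The coordinate function `x_j` as a series. -/
def xvar {ι : Type} [DecidableEq ι] (j : ι) : WFun K ι := dirac K [Sum.inl j]

/-!
Both `d` and the unnormalised homotopy `H' = k • H` (on words of length `k`) are odd derivations
of `𝒪(T[1]X)` that swap one letter `x_i ↔ dx_i`, with the Koszul sign `(-1)^{♯(prefix)}`.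
An odd derivation `S` sends a graded commutator `[u, v]` to `[S u, v] ± [u, S v]`, so `d` and `H`
preserve the span of commutators and descend to `Ω_cyc(X)`. The graded commutator
`dH' + H'd` is an even derivation fixing every letter, hence multiplication by the word length
`k`; dividing by `k` gives `dH + Hd = Id` on forms without constant term.
-/

section Words

variable {ι : Type}

lemma ksgn_add (a b : ℤ) : ksgn K (a + b) = ksgn K a * ksgn K b := by
  by_cases ha : Even a <;> by_cases hb : Even b <;> simp [ksgn, Int.even_add, ha, hb]

lemma ksgn_mul_self (a : ℤ) : ksgn K a * ksgn K a = 1 := by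
  by_cases ha : Even a <;> simp [ksgn, ha]

lemma ksgn_add_one (a : ℤ) : ksgn K (a + 1) = -ksgn K a := by
  by_cases ha : Even a <;> simp [ksgn, ha]

lemma ksgn_add_two_mul (a b : ℤ) : ksgn K (a + 2 * b) = ksgn K a := by
  simp [ksgn, Int.even_add]

lemma _root_.List.modify_append_of_lt {α : Type*} (f : α → α) {u : List α} (v : List α)
    {p : ℕ} (hp : p < u.length) : (u ++ v).modify p f = u.modify p f ++ v := by
  rw [List.modify_eq_take_cons_drop (by simp; omega), List.modify_eq_take_cons_drop hp,
    List.take_append_of_le_length hp.le, List.getElem_append_left hp,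
    List.drop_append_of_le_length hp, List.append_assoc, List.cons_append]

lemma _root_.List.modify_length_add_append {α : Type*} (f : α → α) (u v : List α) (q : ℕ) :
    (u ++ v).modify (u.length + q) f = u ++ v.modify q f := by
  induction u with
  | nil => simp
  | cons a u ih => simp [Nat.add_right_comm, ih]

lemma _root_.List.take_modify_of_le {α : Type*} (f : α → α) (u : List α) {p q : ℕ}
    (h : q ≤ p) : (u.modify p f).take q = u.take q := by
  rw [List.take_modify, List.modify_eq_self (by simp; omega)]

lemma _root_.List.lt_length_of_map_getElem?_eq_some {α β : Type*} {l : List α} {g : α → β}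
    {p : ℕ} {b : β} (h : l[p]?.map g = some b) : p < l.length := by
  by_contra hp
  rw [List.getElem?_eq_none (by omega)] at h
  simp at h

@[simp]
lemma modify_swap_modify_swap (u : GWord ι) (p : ℕ) :
    (u.modify p Sum.swap).modify p Sum.swap = u := by
  rw [List.modify_modify_eq, Sum.swap_swap_eq, List.modify_id]

lemma wordDeg_modify_swap (degx : ι → ℤ) (u : GWord ι) (p : ℕ) :
    wordDeg degx (u.modify p Sum.swap) = wordDeg degx u := by
  rcases lt_or_ge p u.length with hp | hp
  · conv_rhs => rw [← List.take_append_drop p u, List.drop_eq_getElem_cons hp]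
    rw [List.modify_eq_take_cons_drop hp]
    cases u[p] <;> simp [wordDeg, letterDeg]
  · rw [List.modify_eq_self hp]

lemma wordSharp_modify_swap {u : GWord ι} {p : ℕ} (hp : p < u.length) :
    wordSharp (u.modify p Sum.swap) = wordSharp u + 1 - 2 * letterSharp u[p] := by
  have hu : wordSharp u =
      wordSharp (u.take p) + letterSharp u[p] + wordSharp (u.drop (p + 1)) := by
    conv_lhs => rw [← List.take_append_drop p u, List.drop_eq_getElem_cons hp]
    simp only [wordSharp, List.map_append, List.map_cons, List.sum_append, List.sum_cons]
    ring
  rw [hu, List.modify_eq_take_cons_drop hp]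
  cases u[p] <;> simp [wordSharp, letterSharp] <;> ring

lemma ksgn_wordSharp_modify_swap {u : GWord ι} {p : ℕ} (hp : p < u.length) :
    ksgn K (wordSharp (u.modify p Sum.swap)) = -ksgn K (wordSharp u) := by
  rw [wordSharp_modify_swap hp, sub_eq_add_neg, ← mul_neg, ksgn_add_two_mul, ksgn_add_one]

def commSign (degx : ι → ℤ) (u v : GWord ι) : K :=
  ksgn K (wordDeg degx u * wordDeg degx v + wordSharp u * wordSharp v)

lemma commSign_comm (degx : ι → ℤ) (u v : GWord ι) :
    commSign K degx u v = commSign K degx v u := by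
  rw [commSign, commSign, mul_comm (wordDeg degx u), mul_comm (wordSharp u)]

lemma commSign_modify_swap_left (degx : ι → ℤ) {u : GWord ι} {p : ℕ} (hp : p < u.length)
    (v : GWord ι) :
    commSign K degx (u.modify p Sum.swap) v = commSign K degx u v * ksgn K (wordSharp v) := by
  rw [commSign, commSign, wordDeg_modify_swap, wordSharp_modify_swap hp, ← ksgn_add]
  rw [show wordDeg degx u * wordDeg degx v + (wordSharp u + 1 - 2 * letterSharp u[p]) * wordSharp v
    = wordDeg degx u * wordDeg degx v + wordSharp u * wordSharp v + wordSharp v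
      + 2 * (-(letterSharp u[p] * wordSharp v)) by ring, ksgn_add_two_mul]

lemma commSign_modify_swap_right (degx : ι → ℤ) (u : GWord ι) {v : GWord ι} {q : ℕ}
    (hq : q < v.length) :
    commSign K degx u (v.modify q Sum.swap) = ksgn K (wordSharp u) * commSign K degx u v := by
  rw [commSign_comm, commSign_modify_swap_left K degx hq, commSign_comm, mul_comm]

end Words

section SwapSum

variable {ι : Type} {M : Type*} [AddCommGroup M] [Module K M]

def swapSum (b : Bool) (u : GWord ι) : (GWord ι → M) →ₗ[K] M where
  toFun φ := ∑ p ∈ range u.length,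
    if u[p]?.map Sum.isRight = some b then
      ksgn K (wordSharp (u.take p)) • φ (u.modify p Sum.swap) else 0
  map_add' φ ψ := by
    rw [← sum_add_distrib]
    refine sum_congr rfl fun p _ => ?_
    split_ifs <;> simp [smul_add]
  map_smul' c φ := by
    rw [RingHom.id_apply, smul_sum]
    refine sum_congr rfl fun p _ => ?_
    split_ifs <;> simp [smul_comm c]

lemma swapSum_apply (b : Bool) (u : GWord ι) (φ : GWord ι → M) :
    swapSum K b u φ = ∑ p ∈ range u.length,
      if u[p]?.map Sum.isRight = some b then
        ksgn K (wordSharp (u.take p)) • φ (u.modify p Sum.swap) else 0 := rfl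

/-- The Leibniz rule of an odd derivation. -/
lemma swapSum_append (b : Bool) (u v : GWord ι) (φ : GWord ι → M) :
    swapSum K b (u ++ v) φ = swapSum K b u (fun u' => φ (u' ++ v))
      + ksgn K (wordSharp u) • swapSum K b v (fun v' => φ (u ++ v')) := by
  simp only [swapSum_apply, List.length_append, sum_range_add, smul_sum]
  congr 1
  · refine sum_congr rfl fun p hp => ?_
    have hp : p < u.length := mem_range.mp hp
    rw [List.getElem?_append_left hp, List.take_append_of_le_length hp.le,
      List.modify_append_of_lt _ _ hp]
  · refine sum_congr rfl fun q _ => ?_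
    rw [List.getElem?_append_right (by omega), Nat.add_sub_cancel_left,
      List.take_length_add_append, List.modify_length_add_append, smul_ite, smul_zero, smul_smul,
      wordSharp, List.map_append, List.sum_append, ksgn_add]
    rfl

lemma swapSum_mem {S : Submodule K M} {b : Bool} {u : GWord ι} {φ : GWord ι → M}
    (h : ∀ p < u.length, u[p]?.map Sum.isRight = some b → φ (u.modify p Sum.swap) ∈ S) :
    swapSum K b u φ ∈ S := by
  rw [swapSum_apply]
  refine S.sum_mem fun p hp => ?_
  split_ifs with hb
  · exact S.smul_mem _ (h p (mem_range.mp hp) hb)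
  · exact S.zero_mem

end SwapSum

section SwapOperators

variable {ι : Type}

def swapOp (b : Bool) : WFun K ι →ₗ[K] WFun K ι where
  toFun f w := swapSum K b w f
  map_add' f g := funext fun w => map_add (swapSum K b w) f g
  map_smul' c f := funext fun w => map_smul (swapSum K b w) c f

lemma swapOp_apply (b : Bool) (f : WFun K ι) (w : GWord ι) :
    swapOp K b f w = swapSum K b w f := rfl

lemma Dop_eq_swapOp (f : WFun K ι) : Dop K f = swapOp K true f := by
  funext w
  refine sum_congr rfl fun p _ => ?_
  rcases h : w[p]? with _ | (i | i) <;> simp [List.modify_eq_set_getElem?, h]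

lemma Hop_apply (f : WFun K ι) (w : GWord ι) :
    Hop K f w = (w.length : K)⁻¹ * swapOp K false f w := by
  rw [Hop, smul_eq_mul, swapOp_apply, swapSum_apply]
  congr 1
  refine sum_congr rfl fun p _ => ?_
  rcases h : w[p]? with _ | (i | i) <;> simp [List.modify_eq_set_getElem?, h]

lemma trunc_swapOp (b : Bool) (m : ℕ) (f : WFun K ι) :
    trunc K m (swapOp K b f) = swapOp K b (trunc K m f) := by
  funext w
  by_cases hw : w.length = m <;> simp [trunc, hw, swapOp_apply, swapSum_apply]

end SwapOperators

section Commutators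

variable {ι : Type} [DecidableEq ι]

lemma dirac_modify_swap (u w : GWord ι) (p : ℕ) :
    dirac K u (w.modify p Sum.swap) = dirac K (u.modify p Sum.swap) w := by
  have h : w.modify p Sum.swap = u ↔ w = u.modify p Sum.swap := by
    constructor <;> rintro rfl <;> simp
  simp only [dirac, h]

/-- Coefficientwise, `swapOp b` is the transpose of the derivation swapping letters of the
other kind: on monomials, `d` turns `x_i` into `dx_i`. -/
lemma swapOp_dirac (b : Bool) (u : GWord ι) :
    swapOp K b (dirac K u) = swapSum K (!b) u (dirac K) := by
  funext w
  rw [swapOp_apply, swapSum_apply, swapSum_apply, Finset.sum_apply]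
  simp only [ite_apply, Pi.smul_apply, Pi.zero_apply]
  by_cases hlen : w.length = u.length
  · rw [hlen]
    refine sum_congr rfl fun p _ => ?_
    rw [dirac_modify_swap]
    by_cases h : w = u.modify p Sum.swap
    · subst h
      simp [List.take_modify_of_le, Option.map_map, Function.comp_def]
    · simp [dirac, h]
  · have hne : ∀ p, w.modify p Sum.swap ≠ u := fun p h => hlen (by simp [← h])
    have hne' : ∀ p, w ≠ u.modify p Sum.swap := fun p h => hlen (by simp [h])
    simp [dirac, hne, hne']

lemma gcomm_eq (degx : ι → ℤ) (u v : GWord ι) :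
    gcomm K degx u v = dirac K (u ++ v) - commSign K degx u v • dirac K (v ++ u) := rfl

def gcommSpan (degx : ι → ℤ) : Submodule K (WFun K ι) :=
  Submodule.span K (Set.range fun uv : GWord ι × GWord ι => gcomm K degx uv.1 uv.2)

lemma gcomm_mem_gcommSpan (degx : ι → ℤ) (u v : GWord ι) :
    gcomm K degx u v ∈ gcommSpan K degx :=
  Submodule.subset_span ⟨(u, v), rfl⟩

lemma swapOp_gcomm_mem (degx : ι → ℤ) (b : Bool) (u v : GWord ι) :
    swapOp K b (gcomm K degx u v) ∈ gcommSpan K degx := by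
  set c := commSign K degx u v
  have hexp : swapOp K b (gcomm K degx u v) =
      swapSum K (!b) u ((fun u' : GWord ι => dirac K (u' ++ v))
        - (c * ksgn K (wordSharp v)) • fun u' : GWord ι => dirac K (v ++ u'))
      + swapSum K (!b) v ((ksgn K (wordSharp u) • fun v' : GWord ι => dirac K (u ++ v'))
        - c • fun v' : GWord ι => dirac K (v' ++ u)) := by
    rw [gcomm_eq, map_sub, map_smul, swapOp_dirac, swapOp_dirac, swapSum_append, swapSum_append]
    simp only [map_sub, map_smul]
    module
  rw [hexp]
  refine add_mem (swapSum_mem K fun p hp _ => ?_) (swapSum_mem K fun q hq _ => ?_)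
  · convert gcomm_mem_gcommSpan K degx (u.modify p Sum.swap) v using 1
    rw [gcomm_eq, commSign_modify_swap_left K degx hp]
    rfl
  · convert (gcommSpan K degx).smul_mem (ksgn K (wordSharp u))
      (gcomm_mem_gcommSpan K degx u (v.modify q Sum.swap)) using 1
    rw [gcomm_eq, commSign_modify_swap_right K degx u hq, smul_sub, smul_smul, ← mul_assoc,
      ksgn_mul_self, one_mul]
    rfl

lemma gcommSpan_le_comap_swapOp (degx : ι → ℤ) (b : Bool) :
    gcommSpan K degx ≤ (gcommSpan K degx).comap (swapOp K b) :=
  Submodule.span_le.mpr <| by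
    rintro _ ⟨⟨u, v⟩, rfl⟩
    exact swapOp_gcomm_mem K degx b u v

lemma swapOp_mem_CommT (degx : ι → ℤ) (b : Bool) {f : WFun K ι} (hf : f ∈ CommT K degx) :
    swapOp K b f ∈ CommT K degx := fun m => by
  rw [trunc_swapOp]
  exact gcommSpan_le_comap_swapOp K degx b (hf m)

lemma Dop_mem_CommT (degx : ι → ℤ) {f : WFun K ι} (hf : f ∈ CommT K degx) :
    Dop K f ∈ CommT K degx :=
  Dop_eq_swapOp K f ▸ swapOp_mem_CommT K degx true hf

lemma Hop_mem_CommT (degx : ι → ℤ) {f : WFun K ι} (hf : f ∈ CommT K degx) :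
    Hop K f ∈ CommT K degx := fun m => by
  have h : trunc K m (Hop K f) = (m : K)⁻¹ • trunc K m (swapOp K false f) := by
    funext w
    by_cases hw : w.length = m <;> simp [trunc, Hop_apply, hw]
  rw [h]
  exact Submodule.smul_mem _ _ (swapOp_mem_CommT K degx false hf m)

end Commutators

section Homotopy

variable {ι : Type}

def swapTwice (b : Bool) (f : WFun K ι) (w : GWord ι) (p q : ℕ) : K :=
  if w[p]?.map Sum.isRight = some b then
    ksgn K (wordSharp (w.take p)) *
      if (w.modify p Sum.swap)[q]?.map Sum.isRight = some (!b) then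
        ksgn K (wordSharp ((w.modify p Sum.swap).take q)) *
          f ((w.modify p Sum.swap).modify q Sum.swap) else 0
  else 0

lemma swapOp_swapOp_apply (b : Bool) (f : WFun K ι) (w : GWord ι) :
    swapOp K b (swapOp K (!b) f) w =
      ∑ p ∈ range w.length, ∑ q ∈ range w.length, swapTwice K b f w p q := by
  rw [swapOp_apply, swapSum_apply]
  refine sum_congr rfl fun p _ => ?_
  rw [swapOp_apply, swapSum_apply, List.length_modify]
  simp only [swapTwice]
  split_ifs <;> simp [mul_sum]

lemma ksgn_wordSharp_take_modify_swap {w : GWord ι} {p : ℕ} (hp : p < w.length) (q : ℕ) :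
    ksgn K (wordSharp ((w.modify p Sum.swap).take q)) =
      if p < q then -ksgn K (wordSharp (w.take q)) else ksgn K (wordSharp (w.take q)) := by
  rw [List.take_modify]
  split_ifs with hpq
  · exact ksgn_wordSharp_modify_swap K (by simp; omega)
  · rw [List.modify_eq_self (by simp; omega)]

/-- Swapping at `p ≠ q` in either order gives the same word, but the later swap sees the
earlier one in its prefix, which flips the Koszul sign. -/
lemma swapTwice_add_swapTwice_of_ne (b : Bool) (f : WFun K ι) (w : GWord ι) {p q : ℕ}
    (hpq : p ≠ q) : swapTwice K b f w p q + swapTwice K (!b) f w q p = 0 := by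
  simp only [swapTwice, List.getElem?_modify_ne _ _ hpq, List.getElem?_modify_ne _ _ hpq.symm,
    List.modify_modify_ne _ _ _ hpq, Bool.not_not]
  split_ifs with hp hq <;> try simp only [mul_zero, add_zero]
  have hp' : p < w.length := List.lt_length_of_map_getElem?_eq_some hp
  have hq' : q < w.length := List.lt_length_of_map_getElem?_eq_some hq
  have hsign : ksgn K (wordSharp (w.take p)) * ksgn K (wordSharp ((w.modify p Sum.swap).take q))
      + ksgn K (wordSharp (w.take q)) * ksgn K (wordSharp ((w.modify q Sum.swap).take p)) = 0 := by
    rw [ksgn_wordSharp_take_modify_swap K hp', ksgn_wordSharp_take_modify_swap K hq']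
    rcases Nat.lt_or_gt_of_ne hpq with h | h
    · simp [h, h.not_gt, mul_comm]
    · simp [h, h.not_gt, mul_comm]
  linear_combination f ((w.modify q Sum.swap).modify p Sum.swap) * hsign

lemma swapTwice_add_swapTwice_self (b : Bool) (f : WFun K ι) {w : GWord ι} {p : ℕ}
    (hp : p < w.length) : swapTwice K b f w p p + swapTwice K (!b) f w p p = f w := by
  simp only [swapTwice, List.getElem?_modify_eq, modify_swap_modify_swap,
    List.take_modify_of_le _ _ le_rfl, List.getElem?_eq_getElem hp]
  rcases w[p] with i | i <;> cases b <;> simp [← mul_assoc, ksgn_mul_self]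

lemma swapOp_swapOp_add (b : Bool) (f : WFun K ι) (w : GWord ι) :
    swapOp K b (swapOp K (!b) f) w + swapOp K (!b) (swapOp K b f) w = w.length * f w := by
  have h := swapOp_swapOp_apply K (!b) f w
  rw [Bool.not_not] at h
  rw [swapOp_swapOp_apply, h, sum_comm (s := range w.length), ← sum_add_distrib]
  calc _ = ∑ p ∈ range w.length, f w := sum_congr rfl fun p hp => by
          rw [← sum_add_distrib, sum_eq_single p
            (fun q _ hqp => swapTwice_add_swapTwice_of_ne K b f w hqp)
            (fun h => absurd hp h)]
          exact swapTwice_add_swapTwice_self K b f (mem_range.mp hp)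
    _ = _ := by simp

lemma swapOp_length_mul (b : Bool) (c : ℕ → K) (f : WFun K ι) (w : GWord ι) :
    swapOp K b (fun w' => c w'.length * f w') w = c w.length * swapOp K b f w := by
  simp only [swapOp_apply, swapSum_apply, List.length_modify, mul_sum]
  refine sum_congr rfl fun p _ => ?_
  split_ifs <;> simp [mul_left_comm]

lemma Hop_eq (f : WFun K ι) : Hop K f = fun w => (w.length : K)⁻¹ * swapOp K false f w :=
  funext (Hop_apply K f)

lemma Dop_Hop_add_Hop_Dop [CharZero K] {f : WFun K ι} (hf : f [] = 0) :
    Dop K (Hop K f) + Hop K (Dop K f) = f := by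
  funext w
  rcases eq_or_ne w [] with rfl | hw
  · simp [Dop, Hop, hf]
  have h := swapOp_swapOp_add K true f w
  rw [Bool.not_true] at h
  rw [Pi.add_apply, Dop_eq_swapOp, Dop_eq_swapOp, Hop_eq, Hop_eq,
    swapOp_length_mul K true (fun n => (n : K)⁻¹), ← mul_add, h,
    inv_mul_cancel_left₀ (by simpa using hw)]

end Homotopy

theorem noncommutative_poincare_lemma_general
    (K : Type) [Field K] [CharZero K] (ι : Type) [DecidableEq ι]
    (degx : ι → ℤ) :
    -- `d` and `H` descend to the cyclic quotient:
    (∀ f ∈ CommT K degx, Dop K f ∈ CommT K degx ∧ Hop K f ∈ CommT K degx) ∧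
    -- the homotopy identity `dH + Hd = Id` on `Ω_{cyc}(X)`:
    (∀ f : WFun K ι, f [] = 0 →
      Dop K (Hop K f) + Hop K (Dop K f) - f ∈ CommT K degx) ∧
    -- hence the cohomology is trivial:
    (∀ f : WFun K ι, f [] = 0 → Dop K f ∈ CommT K degx →
      ∃ g : WFun K ι, f - Dop K g ∈ CommT K degx) := by
  refine ⟨fun f hf => ⟨Dop_mem_CommT K degx hf, Hop_mem_CommT K degx hf⟩,
    fun f hf => ?_, fun f hf hdf => ⟨Hop K f, ?_⟩⟩
  · rw [Dop_Hop_add_Hop_Dop K hf, sub_self]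
    exact zero_mem _
  · rw [sub_eq_iff_eq_add'.mpr (Dop_Hop_add_Hop_Dop K hf).symm]
    exact Hop_mem_CommT K degx hdf

/-- **Theorem (Poincaré lemma; Cho–Lee, Theorem 2.3, after Kajiura).**
The cohomology of the cyclic de Rham complex `(Ω_{cyc}(X), d)` of a formal
noncommutative manifold is trivial: the operators `d` and `H` (with `H(x_i) = 0`,
`H(dx_i) = x_i`, extended with the `1/k` normalization) descend to
`Ω_{cyc}(X) = 𝒪(T[1]X)/[·,·]_{top}`, where they satisfy `dH + Hd = Id` (on forms with
no constant term); in particular every closed form is exact. -/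
theorem noncommutative_poincare_lemma
    (K : Type) [Field K] [CharZero K] (ι : Type) [Fintype ι] [DecidableEq ι]
    (degx : ι → ℤ) :
    -- `d` and `H` descend to the cyclic quotient:
    (∀ f ∈ CommT K degx, Dop K f ∈ CommT K degx ∧ Hop K f ∈ CommT K degx) ∧
    -- the homotopy identity `dH + Hd = Id` on `Ω_{cyc}(X)`:
    (∀ f : WFun K ι, f [] = 0 →
      Dop K (Hop K f) + Hop K (Dop K f) - f ∈ CommT K degx) ∧
    -- hence the cohomology is trivial:
    (∀ f : WFun K ι, f [] = 0 → Dop K f ∈ CommT K degx →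
      ∃ g : WFun K ι, f - Dop K g ∈ CommT K degx) :=
  noncommutative_poincare_lemma_general K ι degx

end KS
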